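/- arXiv:2406.04731 — 5 statements merged into one kernel-verified Lean document; each statement's English description precedes it below -/
import Mathlib

section
/- Let f_1,...,f_n : D → ℝ be μ-strongly convex, G-Lipschitz differentiable functions on a convex compact set D ⊆ ℝ^d, and let g_i(x) = (1/i)∑_{j=1}^i f_j(x) with minimizer x_i* over D. Then for all i ∈ [n-1] and j ∈ [n-i], ‖x*_{i+j} - x*_i‖ ≤ 2jG/(μ(2i+j)). -/
/-!
The unnormalised sum `S m = ∑_{k ≤ m} f k` is `m μ`-strongly convex and minimised at `x*_m`, and a
strongly convex function grows quadratically away from its minimiser. Adding the growth of `S i`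
at `x*_i` to that of `S (i + j)` at `x*_{i+j}`, everything cancels except the `j` new functions:
`(2i + j) μ / 2 ‖x*_{i+j} - x*_i‖² ≤ ∑_{i < k ≤ i+j} (f k x*_i - f k x*_{i+j}) ≤ j G ‖x*_{i+j} - x*_i‖`.
-/

open Finset Filter Topology

section StrongConvexity

variable {E : Type*} [NormedAddCommGroup E] [NormedSpace ℝ E] {s : Set E} {m n : ℝ}

lemma StrongConvexOn.add {f g : E → ℝ} (hf : StrongConvexOn s m f) (hg : StrongConvexOn s n g) :
    StrongConvexOn s (m + n) (f + g) :=
  (UniformConvexOn.add hf hg).mono fun r ↦ le_of_eq <| by simp only [Pi.add_apply]; ring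

lemma StrongConvexOn.sum {ι : Type*} {t : Finset ι} {f : ι → E → ℝ} (hs : Convex ℝ s)
    (hf : ∀ k ∈ t, StrongConvexOn s m (f k)) :
    StrongConvexOn s (#t * m) (∑ k ∈ t, f k) := by
  classical
  induction t using Finset.induction_on with
  | empty =>
    rw [card_empty, Nat.cast_zero, zero_mul, sum_empty, strongConvexOn_zero]
    exact convexOn_const 0 hs
  | insert k t hk ih =>
    rw [card_insert_of_notMem hk, sum_insert hk, Nat.cast_succ, add_one_mul, add_comm]
    exact (hf k (mem_insert_self k t)).add (ih fun l hl ↦ hf l (mem_insert_of_mem hl))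

/-- Compare `f x` with `f` at the point a fraction `t` of the way towards `y`, and let `t → 0`. -/
lemma StrongConvexOn.sq_norm_sub_le_of_isMinOn {f : E → ℝ} {x y : E}
    (hf : StrongConvexOn s m f) (hx : x ∈ s) (hy : y ∈ s) (hmin : IsMinOn f s x) :
    m / 2 * ‖y - x‖ ^ 2 ≤ f y - f x := by
  have hseg : ∀ t ∈ Set.Ioo (0 : ℝ) 1, (1 - t) * (m / 2 * ‖y - x‖ ^ 2) ≤ f y - f x := by
    rintro t ⟨ht0, ht1⟩
    have hconv := hf.2 hy hx ht0.le (sub_nonneg.2 ht1.le) (add_sub_cancel t 1)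
    have hle := hmin (hf.1 hy hx ht0.le (sub_nonneg.2 ht1.le) (add_sub_cancel t 1))
    simp only [smul_eq_mul, Set.mem_ofPred_eq] at hconv hle
    refine le_of_mul_le_mul_left ?_ ht0
    linarith
  have hlim : Tendsto (fun t : ℝ ↦ (1 - t) * (m / 2 * ‖y - x‖ ^ 2)) (𝓝[>] 0)
      (𝓝 (m / 2 * ‖y - x‖ ^ 2)) := by
    have : Continuous fun t : ℝ ↦ (1 - t) * (m / 2 * ‖y - x‖ ^ 2) := by fun_prop
    simpa using (this.tendsto 0).mono_left nhdsWithin_le_nhds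
  exact le_of_tendsto hlim (eventually_of_mem (Ioo_mem_nhdsGT one_pos) hseg)

lemma StrongConvexOn.norm_sub_le_of_isMinOn_add {F H : E → ℝ} {x y : E} {L : ℝ}
    (hF : StrongConvexOn s m F) (hFH : StrongConvexOn s n (F + H)) (hx : x ∈ s) (hy : y ∈ s)
    (hxmin : IsMinOn F s x) (hymin : IsMinOn (F + H) s y) (hmn : 0 < m + n) (hL : 0 ≤ L)
    (hH : H x - H y ≤ L * ‖x - y‖) :
    ‖y - x‖ ≤ 2 * L / (m + n) := by
  have hgrowF := hF.sq_norm_sub_le_of_isMinOn hx hy hxmin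
  have hgrowFH := hFH.sq_norm_sub_le_of_isMinOn hy hx hymin
  rw [norm_sub_rev] at hgrowFH hH
  simp only [Pi.add_apply] at hgrowFH
  rcases (norm_nonneg (y - x)).eq_or_lt with hzero | hpos
  · rw [← hzero]
    positivity
  · rw [le_div_iff₀ hmn]
    nlinarith

end StrongConvexity

lemma isMinOn_div_const_iff {α : Type*} {F : α → ℝ} {s : Set α} {a : α} {c : ℝ} (hc : 0 < c) :
    IsMinOn (fun x ↦ F x / c) s a ↔ IsMinOn F s a := by
  simp only [isMinOn_iff, div_le_div_iff_of_pos_right hc]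

lemma Finset.sum_apply_sub_le_card_mul {ι E : Type*} [SeminormedAddCommGroup E] (t : Finset ι)
    (f : ι → E → ℝ) {x y : E} {L : ℝ} (h : ∀ k ∈ t, |f k x - f k y| ≤ L * ‖x - y‖) :
    (∑ k ∈ t, f k) x - (∑ k ∈ t, f k) y ≤ #t * L * ‖x - y‖ := by
  simp only [Finset.sum_apply, ← sum_sub_distrib]
  calc ∑ k ∈ t, (f k x - f k y) ≤ ∑ _k ∈ t, L * ‖x - y‖ :=
        sum_le_sum fun k hk ↦ (le_abs_self _).trans (h k hk)
    _ = #t * L * ‖x - y‖ := by rw [sum_const, nsmul_eq_mul, mul_assoc]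

theorem stmt0_general {d n : ℕ} (μ G : ℝ) (hμ : 0 < μ) (hG : 0 < G)
    (D : Set (EuclideanSpace ℝ (Fin d))) (hDconv : Convex ℝ D)
    (f : ℕ → EuclideanSpace ℝ (Fin d) → ℝ)
    (hsc : ∀ k ∈ Finset.Icc 1 n, StrongConvexOn D μ (f k))
    (hlip : ∀ k ∈ Finset.Icc 1 n, ∀ x ∈ D, ∀ y ∈ D, |f k x - f k y| ≤ G * ‖x - y‖)
    (g : ℕ → EuclideanSpace ℝ (Fin d) → ℝ)
    (hg : ∀ i x, g i x = (∑ k ∈ Finset.Icc 1 i, f k x) / i)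
    (xstar : ℕ → EuclideanSpace ℝ (Fin d))
    (hxstarD : ∀ i ∈ Finset.Icc 1 n, xstar i ∈ D)
    (hxstarmin : ∀ i ∈ Finset.Icc 1 n, IsMinOn (g i) D (xstar i)) :
    ∀ i ∈ Finset.Icc 1 (n - 1), ∀ j ∈ Finset.Icc 1 (n - i),
      ‖xstar (i + j) - xstar i‖ ≤ 2 * j * G / (μ * (2 * i + j)) := by
  intro i hi j hj
  obtain ⟨hi1, -⟩ := mem_Icc.1 hi
  obtain ⟨hj1, hjn⟩ := mem_Icc.1 hj
  have hi_mem : i ∈ Icc 1 n := mem_Icc.2 ⟨hi1, by omega⟩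
  have hij_mem : i + j ∈ Icc 1 n := mem_Icc.2 ⟨by omega, by omega⟩
  let S : ℕ → EuclideanSpace ℝ (Fin d) → ℝ := fun m ↦ ∑ k ∈ Icc 1 m, f k
  have hS_sc : ∀ m ∈ Icc 1 n, StrongConvexOn D (m * μ) (S m) := fun m hm ↦ by
    simpa using StrongConvexOn.sum hDconv fun k hk ↦
      hsc k (Icc_subset_Icc_right (mem_Icc.1 hm).2 hk)
  have hS_min : ∀ m ∈ Icc 1 n, IsMinOn (S m) D (xstar m) := fun m hm ↦ by
    have hgS : g m = fun x ↦ S m x / m := funext fun x ↦ by simp only [hg, S, Finset.sum_apply]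
    exact (isMinOn_div_const_iff (by exact_mod_cast (mem_Icc.1 hm).1)).1 (hgS ▸ hxstarmin m hm)
  let H : EuclideanSpace ℝ (Fin d) → ℝ := ∑ k ∈ Ioc i (i + j), f k
  have hsplit : S (i + j) = S i + H := by
    have hIcc : ∀ m, Icc 1 m = Ioc 0 m := Icc_add_one_left_eq_Ioc 0
    simp only [S, H, hIcc]
    exact (sum_Ioc_consecutive f (Nat.zero_le i) (Nat.le_add_right i j)).symm
  have hH : H (xstar i) - H (xstar (i + j)) ≤ j * G * ‖xstar i - xstar (i + j)‖ := by
    refine (sum_apply_sub_le_card_mul _ f fun k hk ↦ hlip k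
      (Ioc_subset_Icc_self.trans (Icc_subset_Icc (by omega) (by omega)) hk)
      _ (hxstarD i hi_mem) _ (hxstarD _ hij_mem)).trans_eq ?_
    rw [Nat.card_Ioc, Nat.add_sub_cancel_left]
  have hdrift := (hS_sc i hi_mem).norm_sub_le_of_isMinOn_add (hsplit ▸ hS_sc (i + j) hij_mem)
    (hxstarD i hi_mem) (hxstarD _ hij_mem) (hS_min i hi_mem) (hsplit ▸ hS_min _ hij_mem)
    (by positivity) (by positivity) hH
  calc ‖xstar (i + j) - xstar i‖ ≤ 2 * (j * G) / (i * μ + (i + j : ℕ) * μ) := hdrift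
    _ = 2 * j * G / (μ * (2 * i + j)) := by push_cast; ring

/-- Drift bound between consecutive prefix minimizers. -/
theorem stmt0 {d n : ℕ} (μ G : ℝ) (hμ : 0 < μ) (hG : 0 < G)
    (D : Set (EuclideanSpace ℝ (Fin d))) (hDconv : Convex ℝ D) (hDcomp : IsCompact D)
    (f : ℕ → EuclideanSpace ℝ (Fin d) → ℝ)
    (hsc : ∀ k ∈ Finset.Icc 1 n, StrongConvexOn D μ (f k))
    (hdiff : ∀ k ∈ Finset.Icc 1 n, ∀ x ∈ D, DifferentiableAt ℝ (f k) x)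
    (hlip : ∀ k ∈ Finset.Icc 1 n, ∀ x ∈ D, ∀ y ∈ D, |f k x - f k y| ≤ G * ‖x - y‖)
    (g : ℕ → EuclideanSpace ℝ (Fin d) → ℝ)
    (hg : ∀ i x, g i x = (∑ k ∈ Finset.Icc 1 i, f k x) / i)
    (xstar : ℕ → EuclideanSpace ℝ (Fin d))
    (hxstarD : ∀ i ∈ Finset.Icc 1 n, xstar i ∈ D)
    (hxstarmin : ∀ i ∈ Finset.Icc 1 n, IsMinOn (g i) D (xstar i)) :
    ∀ i ∈ Finset.Icc 1 (n - 1), ∀ j ∈ Finset.Icc 1 (n - i),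
      ‖xstar (i + j) - xstar i‖ ≤ 2 * j * G / (μ * (2 * i + j)) :=
  stmt0_general μ G hμ hG D hDconv f hsc hlip g hg xstar hxstarD hxstarmin
end

section
/- Under the setting of the unbiased estimator, if each f_k is L-smooth, then E[‖∇ - ∇g_i(x)‖²] ≤ 4(1 - 1/i)² L² ‖x - x̂_prev‖², and consequently E[‖∇ - ∇g_i(x)‖²] ≤ 8L²(1 - 1/i)²(‖x - x_i*‖² + ‖x_i* - x̂_prev‖²). -/
open Finset
set_option maxHeartbeats 800000

/-- Variance bound for the CSVRG gradient estimator under L-smoothness. -/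
theorem stmt4 {d : ℕ} (i : ℕ) (hi : 2 ≤ i) (L : ℝ) (hL : 0 ≤ L)
    (D : Set (EuclideanSpace ℝ (Fin d))) (hDconv : Convex ℝ D)
    (f : ℕ → EuclideanSpace ℝ (Fin d) → ℝ)
    (Gf : ℕ → EuclideanSpace ℝ (Fin d) → EuclideanSpace ℝ (Fin d))
    (hgrad : ∀ k ∈ Finset.Icc 1 i, ∀ x, HasGradientAt (f k) (Gf k x) x)
    (hsmooth : ∀ k ∈ Finset.Icc 1 i, ∀ x y, ‖Gf k x - Gf k y‖ ≤ L * ‖x - y‖)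
    (g : EuclideanSpace ℝ (Fin d) → ℝ)
    (hg : ∀ y, g y = (∑ k ∈ Finset.Icc 1 i, f k y) / i)
    (xstar : EuclideanSpace ℝ (Fin d)) (hxsD : xstar ∈ D) (hmin : IsMinOn g D xstar)
    (xp x : EuclideanSpace ℝ (Fin d)) (hxp : xp ∈ D) (hx : x ∈ D)
    (tilde : EuclideanSpace ℝ (Fin d))
    (htilde : tilde = ((i : ℝ) - 1)⁻¹ • ∑ k ∈ Finset.Icc 1 (i - 1), Gf k xp)
    (est : ℕ → EuclideanSpace ℝ (Fin d))
    (hest : ∀ u, est u =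
      (1 - 1 / (i : ℝ)) • (Gf u x - Gf u xp + tilde) + ((i : ℝ))⁻¹ • Gf i x)
    (gradg : EuclideanSpace ℝ (Fin d))
    (hgradg : gradg = ((i : ℝ))⁻¹ • ∑ k ∈ Finset.Icc 1 i, Gf k x) :
    ((i : ℝ) - 1)⁻¹ * ∑ u ∈ Finset.Icc 1 (i - 1), ‖est u - gradg‖ ^ 2 ≤
        4 * (1 - 1 / (i : ℝ)) ^ 2 * L ^ 2 * ‖x - xp‖ ^ 2 ∧
    ((i : ℝ) - 1)⁻¹ * ∑ u ∈ Finset.Icc 1 (i - 1), ‖est u - gradg‖ ^ 2 ≤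
        8 * L ^ 2 * (1 - 1 / (i : ℝ)) ^ 2 * (‖x - xstar‖ ^ 2 + ‖xstar - xp‖ ^ 2) := by
  have hi2 : (2:ℝ) ≤ (i:ℝ) := by exact_mod_cast hi
  have hipos : (0:ℝ) < (i:ℝ) := by linarith
  have him : (0:ℝ) < (i:ℝ) - 1 := by linarith
  set c : ℝ := 1 - 1/(i:ℝ) with hc
  have hine : (i:ℝ) ≠ 0 := hipos.ne'
  have hmne : (i:ℝ) - 1 ≠ 0 := him.ne'
  have hc0 : 0 ≤ c := by
    rw [hc, sub_nonneg, div_le_one hipos]; linarith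
  have hcard : ((i-1 : ℕ) : ℝ) = (i:ℝ) - 1 := by
    have h1 : 1 ≤ i := by omega
    push_cast [h1]; ring
  set S := ∑ k ∈ Finset.Icc 1 (i-1), Gf k x with hS
  set T := ∑ k ∈ Finset.Icc 1 (i-1), Gf k xp with hT
  have hsplit : ∑ k ∈ Finset.Icc 1 i, Gf k x = S + Gf i x := by
    have hins : Finset.Icc 1 i = insert i (Finset.Icc 1 (i-1)) := by
      ext k; simp [Finset.mem_insert]; omega
    have hnot : i ∉ Finset.Icc 1 (i-1) := by simp; omega
    rw [hins, Finset.sum_insert hnot, add_comm]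
  have key : ∀ u ∈ Finset.Icc 1 (i-1), ‖est u - gradg‖ ≤ 2*c*L*‖x - xp‖ := by
    intro u hu
    have hui : u ∈ Finset.Icc 1 i := by
      simp only [Finset.mem_Icc] at hu ⊢; omega
    have heq : est u - gradg
        = c • (Gf u x - Gf u xp) + ((i:ℝ))⁻¹ • (T - S) := by
      rw [hest, hgradg, htilde, hsplit]
      match_scalars <;> (try simp only [hc]) <;> (try field_simp) <;> (try ring)
    rw [heq]
    have h1 : ‖c • (Gf u x - Gf u xp)‖ ≤ c * (L * ‖x - xp‖) := by
      rw [norm_smul, Real.norm_eq_abs, abs_of_nonneg hc0]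
      exact mul_le_mul_of_nonneg_left (hsmooth u hui x xp) hc0
    have h2 : ‖((i:ℝ))⁻¹ • (T - S)‖ ≤ (i:ℝ)⁻¹ * (((i:ℝ)-1) * (L * ‖x - xp‖)) := by
      rw [norm_smul, Real.norm_eq_abs, abs_of_nonneg (by positivity : (0:ℝ) ≤ (i:ℝ)⁻¹)]
      apply mul_le_mul_of_nonneg_left _ (by positivity)
      have hTS : T - S = ∑ k ∈ Finset.Icc 1 (i-1), (Gf k xp - Gf k x) := by
        rw [hS, hT, Finset.sum_sub_distrib]
      rw [hTS]
      calc ‖∑ k ∈ Finset.Icc 1 (i-1), (Gf k xp - Gf k x)‖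
          ≤ ∑ k ∈ Finset.Icc 1 (i-1), ‖Gf k xp - Gf k x‖ := norm_sum_le _ _
        _ ≤ ∑ k ∈ Finset.Icc 1 (i-1), (L * ‖x - xp‖) := by
            apply Finset.sum_le_sum
            intro k hk
            have hki : k ∈ Finset.Icc 1 i := by
              simp only [Finset.mem_Icc] at hk ⊢; omega
            have := hsmooth k hki xp x
            rwa [norm_sub_rev x xp]
        _ = ((i:ℝ)-1) * (L * ‖x - xp‖) := by
            rw [Finset.sum_const, Nat.card_Icc]
            simp only [nsmul_eq_mul]
            rw [show i - 1 + 1 - 1 = i - 1 from by omega, hcard]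
    calc ‖c • (Gf u x - Gf u xp) + ((i:ℝ))⁻¹ • (T - S)‖
        ≤ ‖c • (Gf u x - Gf u xp)‖ + ‖((i:ℝ))⁻¹ • (T - S)‖ := norm_add_le _ _
      _ ≤ c * (L * ‖x - xp‖) + (i:ℝ)⁻¹ * (((i:ℝ)-1) * (L * ‖x - xp‖)) := add_le_add h1 h2
      _ = 2*c*L*‖x - xp‖ := by
          simp only [hc]; field_simp; ring
  have sumbd : ∑ u ∈ Finset.Icc 1 (i-1), ‖est u - gradg‖ ^ 2
      ≤ ((i:ℝ)-1) * (2*c*L*‖x - xp‖)^2 := by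
    calc ∑ u ∈ Finset.Icc 1 (i-1), ‖est u - gradg‖ ^ 2
        ≤ ∑ u ∈ Finset.Icc 1 (i-1), (2*c*L*‖x - xp‖)^2 := by
          apply Finset.sum_le_sum
          intro u hu
          exact pow_le_pow_left₀ (norm_nonneg _) (key u hu) 2
      _ = ((i:ℝ)-1) * (2*c*L*‖x - xp‖)^2 := by
          rw [Finset.sum_const, Nat.card_Icc, nsmul_eq_mul,
            show i - 1 + 1 - 1 = i - 1 from by omega, hcard]
  have first : ((i : ℝ) - 1)⁻¹ * ∑ u ∈ Finset.Icc 1 (i - 1), ‖est u - gradg‖ ^ 2 ≤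
      4 * (1 - 1 / (i : ℝ)) ^ 2 * L ^ 2 * ‖x - xp‖ ^ 2 := by
    have h := mul_le_mul_of_nonneg_left sumbd (by positivity : (0:ℝ) ≤ ((i:ℝ)-1)⁻¹)
    calc ((i : ℝ) - 1)⁻¹ * ∑ u ∈ Finset.Icc 1 (i - 1), ‖est u - gradg‖ ^ 2
        ≤ ((i:ℝ)-1)⁻¹ * (((i:ℝ)-1) * (2*c*L*‖x - xp‖)^2) := h
      _ = 4 * c ^ 2 * L ^ 2 * ‖x - xp‖ ^ 2 := by
          simp only [hc]; field_simp; ring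
  refine ⟨first, ?_⟩
  have htri : ‖x - xp‖ ≤ ‖x - xstar‖ + ‖xstar - xp‖ := by
    calc ‖x - xp‖ = ‖(x - xstar) + (xstar - xp)‖ := by rw [sub_add_sub_cancel]
      _ ≤ ‖x - xstar‖ + ‖xstar - xp‖ := norm_add_le _ _
  have hsq : ‖x - xp‖^2 ≤ 2 * (‖x - xstar‖^2 + ‖xstar - xp‖^2) := by
    nlinarith [norm_nonneg (x - xp), norm_nonneg (x - xstar), norm_nonneg (xstar - xp),
      sq_nonneg (‖x - xstar‖ - ‖xstar - xp‖)]
  calc ((i : ℝ) - 1)⁻¹ * ∑ u ∈ Finset.Icc 1 (i - 1), ‖est u - gradg‖ ^ 2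
      ≤ 4 * c ^ 2 * L ^ 2 * ‖x - xp‖ ^ 2 := first
    _ ≤ 8 * L ^ 2 * c ^ 2 * (‖x - xstar‖ ^ 2 + ‖xstar - xp‖ ^ 2) := by nlinarith [sq_nonneg c, sq_nonneg L, mul_nonneg (mul_nonneg (sq_nonneg c) (sq_nonneg L)) (sub_nonneg.mpr hsq)]
end

section
/- Let g : ℝ^d → ℝ be μ-strongly convex and consider the projected stochastic step x_{t+1} = Π_D(x_t - γ_t ∇̂_t) on a convex compact set D, where E[∇̂_t | F_t] = ∇g(x_t) and g is L-smooth. If γ_t ∈ (0, 1/L), then E[g(x_{t+1}) - g(x*)] ≤ E[ (γ_t/(2(1-γ_t L)))‖∇̂_t - ∇g(x_t)‖² + ((1-μγ_t)/(2γ_t))‖x* - x_t‖² - (1/(2γ_t))‖x* - x_{t+1}‖² ], where x* = argmin_{x∈D} g(x). -/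
/-!
Strong convexity at `x_t` and the descent lemma for the `L`-smooth `g` bound `g(x_{t+1}) - g(x*)`
by `⟪∇g(x_t), x_{t+1} - x*⟫` plus quadratic terms. Write `∇g(x_t) = ∇̂_t + (∇g(x_t) - ∇̂_t)`: the
`∇̂_t` part is controlled by the variational inequality of the projection and the three-point
identity, the error paired with `x_{t+1} - x_t` by Young's inequality with weight `(1 - γL)/γ`,
which cancels the `‖x_{t+1} - x_t‖²` terms, and the error paired with `x_t - x*` has mean zero.
Both first-order bounds come from convexity along lines: `g - μ‖·‖²/2` is convex, and
`L‖·‖²/2 - g` has a monotone gradient.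
-/

open MeasureTheory Set RealInnerProductSpace

section FirstOrder

variable {E : Type*} [NormedAddCommGroup E] [NormedSpace ℝ E] {f : E → ℝ}

theorem HasFDerivAt.hasDerivAt_comp_lineMap {f' : E →L[ℝ] ℝ} {x y : E} {t : ℝ}
    (hf : HasFDerivAt f f' (AffineMap.lineMap x y t)) :
    HasDerivAt (f ∘ AffineMap.lineMap x y) (f' (y - x)) t := by
  simpa using hf.comp_hasDerivAt t AffineMap.hasDerivAt_lineMap

theorem ConvexOn.add_fderiv_le (hf : ConvexOn ℝ univ f) {f' : E →L[ℝ] ℝ} {x : E}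
    (hx : HasFDerivAt f f' x) (y : E) : f x + f' (y - x) ≤ f y := by
  have hline : ConvexOn ℝ univ (f ∘ AffineMap.lineMap (k := ℝ) x y) := by
    simpa using hf.comp_affineMap (AffineMap.lineMap x y)
  have hderiv : HasDerivAt (f ∘ AffineMap.lineMap (k := ℝ) x y) (f' (y - x)) 0 :=
    HasFDerivAt.hasDerivAt_comp_lineMap (by simpa using hx)
  have := hline.le_slope_of_hasDerivAt (mem_univ 0) (mem_univ 1) one_pos hderiv
  rw [slope_def_field] at this
  simp only [Function.comp_apply, AffineMap.lineMap_apply_zero, AffineMap.lineMap_apply_one,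
    sub_zero, div_one] at this
  linarith

theorem convexOn_univ_of_monotone_fderiv {f' : E → E →L[ℝ] ℝ}
    (hf : ∀ x, HasFDerivAt f (f' x) x) (hmono : ∀ x y, 0 ≤ (f' x - f' y) (x - y)) :
    ConvexOn ℝ univ f := by
  refine ⟨convex_univ, fun x _ y _ a b ha hb hab => ?_⟩
  set l : ℝ →ᵃ[ℝ] E := AffineMap.lineMap x y
  have hderiv : ∀ t, HasDerivAt (f ∘ l) (f' (l t) (y - x)) t :=
    fun t => (hf (l t)).hasDerivAt_comp_lineMap
  have hline : ConvexOn ℝ univ (f ∘ l) := by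
    refine Monotone.convexOn_univ_of_deriv (fun t => (hderiv t).differentiableAt) fun s t hst => ?_
    rw [(hderiv s).deriv, (hderiv t).deriv]
    obtain rfl | hlt := hst.eq_or_lt
    · rfl
    have hsub : l t - l s = (t - s) • (y - x) := by
      simp only [l, AffineMap.lineMap_apply_module', sub_smul]; abel
    have := hmono (l t) (l s)
    rw [hsub, map_smul, smul_eq_mul, sub_apply] at this
    linarith [nonneg_of_mul_nonneg_right this (sub_pos.2 hlt)]
  have := hline.2 (mem_univ 0) (mem_univ 1) ha hb hab
  obtain rfl : a = 1 - b := by linarith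
  simpa [l, AffineMap.lineMap_apply_module] using this

end FirstOrder

section InnerProduct

variable {E : Type*} [NormedAddCommGroup E] [InnerProductSpace ℝ E]

theorem norm_sq_eq_norm_sq_add_inner_add_norm_sub_sq (x y : E) :
    ‖y‖ ^ 2 = ‖x‖ ^ 2 + 2 * ⟪x, y - x⟫ + ‖y - x‖ ^ 2 := by
  rw [← norm_add_sq_real, add_sub_cancel]

theorem real_inner_le_div_add_mul {c : ℝ} (hc : 0 < c) (a b : E) :
    ⟪a, b⟫ ≤ ‖a‖ ^ 2 / (2 * c) + c / 2 * ‖b‖ ^ 2 := by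
  have key : 0 ≤ (‖a‖ - c * ‖b‖) ^ 2 / (2 * c) := by positivity
  calc ⟪a, b⟫ ≤ ‖a‖ * ‖b‖ := real_inner_le_norm a b
    _ = ‖a‖ ^ 2 / (2 * c) + c / 2 * ‖b‖ ^ 2 - (‖a‖ - c * ‖b‖) ^ 2 / (2 * c) := by
      field_simp; ring
    _ ≤ _ := by linarith

theorem Convex.real_inner_sub_le_zero_of_isMinOn {D : Set E} (hD : Convex ℝ D) {u n y : E}
    (hn : n ∈ D) (hmin : IsMinOn (‖· - u‖) D n) (hy : y ∈ D) : ⟪u - n, y - n⟫ ≤ 0 := by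
  have : Nonempty D := ⟨⟨n, hn⟩⟩
  refine (norm_eq_iInf_iff_real_inner_le_zero hD hn).mp (le_antisymm ?_ ?_) y hy
  · exact le_ciInf fun w => by simpa only [norm_sub_rev u] using isMinOn_iff.mp hmin w w.2
  · have hbdd : BddBelow (range fun w : D => ‖u - w‖) := ⟨0, by rintro r ⟨w, rfl⟩; positivity⟩
    exact ciInf_le hbdd ⟨n, hn⟩

theorem Convex.two_mul_real_inner_le_of_isMinOn {D : Set E} (hD : Convex ℝ D) {γ : ℝ}
    {x e n z : E} (hn : n ∈ D) (hmin : IsMinOn (‖· - (x - γ • e)‖) D n) (hz : z ∈ D) :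
    2 * γ * ⟪e, n - z⟫ ≤ ‖z - x‖ ^ 2 - ‖z - n‖ ^ 2 - ‖n - x‖ ^ 2 := by
  have hvi := hD.real_inner_sub_le_zero_of_isMinOn hn hmin hz
  have hsplit : x - γ • e - n = (x - n) - γ • e := by abel
  have hthree : ‖z - x‖ ^ 2 = ‖z - n‖ ^ 2 - 2 * ⟪x - n, z - n⟫ + ‖n - x‖ ^ 2 := by
    rw [show z - x = (z - n) - (x - n) by abel, norm_sub_sq_real, real_inner_comm, norm_sub_rev x]
  rw [hsplit, inner_sub_left, real_inner_smul_left] at hvi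
  rw [show n - z = -(z - n) by abel, inner_neg_right]
  linarith

variable [CompleteSpace E] {f : E → ℝ} {f' : E → E}

theorem StrongConvexOn.add_inner_add_le_of_hasGradientAt {μ : ℝ} (hf : StrongConvexOn univ μ f)
    {x g : E} (hx : HasGradientAt f g x) (y : E) :
    f x + ⟪g, y - x⟫ + μ / 2 * ‖y - x‖ ^ 2 ≤ f y := by
  have h := (strongConvexOn_iff_convex.mp hf).add_fderiv_le
    ((hasGradientAt_iff_hasFDerivAt.mp hx).sub
      ((hasStrictFDerivAt_norm_sq x).hasFDerivAt.const_mul (μ / 2))) y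
  simp only [sub_apply, smul_apply, Nat.cast_ofNat,
    InnerProductSpace.toDual_apply_apply, innerSL_apply_apply, smul_eq_mul, nsmul_eq_mul] at h
  linear_combination h - μ / 2 * norm_sq_eq_norm_sq_add_inner_add_norm_sub_sq x y

theorem le_add_inner_add_of_lipschitz_gradient {L : ℝ} (hf : ∀ x, HasGradientAt f (f' x) x)
    (hL : ∀ x y, ‖f' x - f' y‖ ≤ L * ‖x - y‖) (x y : E) :
    f y ≤ f x + ⟪f' x, y - x⟫ + L / 2 * ‖y - x‖ ^ 2 := by
  have hderiv : ∀ z, HasFDerivAt (fun z => L / 2 * ‖z‖ ^ 2 - f z)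
      ((L / 2) • (2 • innerSL ℝ z) - InnerProductSpace.toDual ℝ E (f' z)) z :=
    fun z => ((hasStrictFDerivAt_norm_sq z).hasFDerivAt.const_mul (L / 2)).sub
      (hasGradientAt_iff_hasFDerivAt.mp (hf z))
  have hconv : ConvexOn ℝ univ fun z => L / 2 * ‖z‖ ^ 2 - f z := by
    refine convexOn_univ_of_monotone_fderiv hderiv fun z w => ?_
    simp only [sub_apply, smul_apply, Nat.cast_ofNat,
      InnerProductSpace.toDual_apply_apply, innerSL_apply_apply, smul_eq_mul, nsmul_eq_mul]
    have hcs := real_inner_le_norm (f' z - f' w) (z - w)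
    have hlip := mul_le_mul_of_nonneg_right (hL z w) (norm_nonneg (z - w))
    have hnorm : ‖z - w‖ ^ 2 = ⟪z, z - w⟫ - ⟪w, z - w⟫ := by
      rw [← real_inner_self_eq_norm_sq, inner_sub_left]
    rw [inner_sub_left] at hcs
    linear_combination hcs + hlip + L * hnorm
  have h := hconv.add_fderiv_le (hderiv x) y
  simp only [sub_apply, smul_apply, Nat.cast_ofNat,
    InnerProductSpace.toDual_apply_apply, innerSL_apply_apply, smul_eq_mul, nsmul_eq_mul] at h
  linear_combination h + L / 2 * norm_sq_eq_norm_sq_add_inner_add_norm_sub_sq x y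

theorem StrongConvexOn.eq_of_hasGradientAt_zero {μ : ℝ} (hμ : 0 < μ)
    (hf : StrongConvexOn univ μ f) {x y : E} (hx : HasGradientAt f 0 x) (hy : f y ≤ f x) :
    y = x := by
  have h := hf.add_inner_add_le_of_hasGradientAt hx y
  rw [inner_zero_left, add_zero] at h
  have hsq : ‖y - x‖ ^ 2 ≤ 0 := by nlinarith
  rw [← sub_eq_zero, ← norm_eq_zero]
  exact pow_eq_zero_iff two_ne_zero |>.mp (le_antisymm hsq (sq_nonneg _))

theorem Convex.sub_le_of_projected_gradient_step {D : Set E} (hD : Convex ℝ D)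
    {μ L γ : ℝ} (hγ : 0 < γ) (hγL : γ * L < 1)
    (hf : ∀ x, HasGradientAt f (f' x) x) (hsc : StrongConvexOn univ μ f)
    (hL : ∀ x y, ‖f' x - f' y‖ ≤ L * ‖x - y‖) {x e n z : E} (hz : z ∈ D) (hn : n ∈ D)
    (hmin : IsMinOn (‖· - (x - γ • e)‖) D n) :
    f n - f z ≤ γ / (2 * (1 - γ * L)) * ‖e - f' x‖ ^ 2 + (1 - μ * γ) / (2 * γ) * ‖z - x‖ ^ 2
      - 1 / (2 * γ) * ‖z - n‖ ^ 2 + ⟪f' x - e, x - z⟫ := by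
  have hlower := hsc.add_inner_add_le_of_hasGradientAt (hf x) z
  have hupper := le_add_inner_add_of_lipschitz_gradient hf hL x n
  have hproj : ⟪e, n - z⟫ ≤ 1 / (2 * γ) * ‖z - x‖ ^ 2 - 1 / (2 * γ) * ‖z - n‖ ^ 2
      - 1 / (2 * γ) * ‖n - x‖ ^ 2 := by
    rw [← mul_sub, ← mul_sub, one_div_mul_eq_div, le_div_iff₀ (by positivity)]
    linarith [hD.two_mul_real_inner_le_of_isMinOn hn hmin hz]
  have hyoung : ⟪f' x - e, n - x⟫ ≤
      γ / (2 * (1 - γ * L)) * ‖e - f' x‖ ^ 2 + (1 / (2 * γ) - L / 2) * ‖n - x‖ ^ 2 := by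
    have hc : 0 < (1 - γ * L) / γ := div_pos (by linarith) hγ
    convert real_inner_le_div_add_mul hc (f' x - e) (n - x) using 2
    · rw [norm_sub_rev]; field_simp
    · field_simp
  have hsplit : ⟪f' x, n - x⟫ - ⟪f' x, z - x⟫ =
      ⟪f' x - e, n - x⟫ + ⟪f' x - e, x - z⟫ + ⟪e, n - z⟫ := by
    simp only [inner_sub_left, inner_sub_right]; ring
  have hcoef : (1 - μ * γ) / (2 * γ) = 1 / (2 * γ) - μ / 2 := by field_simp
  rw [hcoef]
  linarith

theorem integral_inner_sub_eq_zero {Ω : Type*} [MeasurableSpace Ω] {P : Measure Ω}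
    [IsProbabilityMeasure P] {X : Ω → E} (hX : Integrable X P) (w : E) :
    ∫ ω, ⟪(∫ ω', X ω' ∂P) - X ω, w⟫ ∂P = 0 := by
  have hcentered : Integrable (fun ω => (∫ ω', X ω' ∂P) - X ω) P := (integrable_const _).sub hX
  simp_rw [real_inner_comm w]
  rw [integral_inner hcentered, integral_sub (integrable_const _) hX,
    integral_const, probReal_univ, one_smul, sub_self, inner_zero_right]

end InnerProduct

theorem stmt7_general {d : ℕ} {Ω : Type*} [MeasurableSpace Ω]
    (P : Measure Ω) [IsProbabilityMeasure P]
    (μ L γ : ℝ) (hμ : 0 < μ) (hγ : γ ∈ Set.Ioo 0 (1 / L))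
    (D : Set (EuclideanSpace ℝ (Fin d))) (hDconv : Convex ℝ D)
    (g : EuclideanSpace ℝ (Fin d) → ℝ)
    (g' : EuclideanSpace ℝ (Fin d) → EuclideanSpace ℝ (Fin d))
    (hgrad : ∀ x, HasGradientAt g (g' x) x)
    (hsc : StrongConvexOn Set.univ μ g)
    (hsmooth : ∀ x y, ‖g' x - g' y‖ ≤ L * ‖x - y‖)
    (xstar : EuclideanSpace ℝ (Fin d)) (hxs : xstar ∈ D) (hmin : IsMinOn g D xstar)
    (xt : EuclideanSpace ℝ (Fin d)) (hxt : xt ∈ D)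
    (est : Ω → EuclideanSpace ℝ (Fin d))
    (hunbiased : ∫ ω, est ω ∂P = g' xt)
    (xnext : Ω → EuclideanSpace ℝ (Fin d))
    (hnextD : ∀ ω, xnext ω ∈ D)
    (hproj : ∀ ω, ∀ y ∈ D, ‖xnext ω - (xt - γ • est ω)‖ ≤ ‖y - (xt - γ • est ω)‖)
    (hint1 : Integrable (fun ω => g (xnext ω)) P)
    (hint2 : Integrable (fun ω => ‖est ω - g' xt‖ ^ 2) P)
    (hint3 : Integrable (fun ω => ‖xstar - xnext ω‖ ^ 2) P) :
    ∫ ω, (g (xnext ω) - g xstar) ∂P ≤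
      ∫ ω, (γ / (2 * (1 - γ * L)) * ‖est ω - g' xt‖ ^ 2
        + (1 - μ * γ) / (2 * γ) * ‖xstar - xt‖ ^ 2
        - 1 / (2 * γ) * ‖xstar - xnext ω‖ ^ 2) ∂P := by
  obtain ⟨hγ0, hγL⟩ := hγ
  have hL : 0 < L := one_div_pos.mp (hγ0.trans hγL)
  rw [lt_div_iff₀ hL] at hγL
  set cross := fun ω => ⟪g' xt - est ω, xt - xstar⟫
  have hstep (ω : Ω) := hDconv.sub_le_of_projected_gradient_step hγ0 hγL hgrad hsc
    hsmooth hxs (hnextD ω) (isMinOn_iff.mpr (hproj ω))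
  have hcross : Integrable cross P ∧ ∫ ω, cross ω ∂P = 0 := by
    by_cases hest : Integrable est P
    · simp only [cross, ← hunbiased]
      exact ⟨((integrable_const _).sub hest).inner_const _, integral_inner_sub_eq_zero hest _⟩
    · -- the junk value `∫ est = 0` makes `xt` a critical point, hence the minimiser `xstar`
      have hcrit : HasGradientAt g 0 xt := by
        rw [← integral_undef hest, hunbiased]; exact hgrad xt
      simp [cross, hsc.eq_of_hasGradientAt_zero hμ hcrit (hmin hxt)]
  have hbound : Integrable (fun ω => γ / (2 * (1 - γ * L)) * ‖est ω - g' xt‖ ^ 2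
      + (1 - μ * γ) / (2 * γ) * ‖xstar - xt‖ ^ 2 - 1 / (2 * γ) * ‖xstar - xnext ω‖ ^ 2) P :=
    ((hint2.const_mul _).add (integrable_const _)).sub (hint3.const_mul _)
  calc ∫ ω, (g (xnext ω) - g xstar) ∂P
      ≤ ∫ ω, ((γ / (2 * (1 - γ * L)) * ‖est ω - g' xt‖ ^ 2
          + (1 - μ * γ) / (2 * γ) * ‖xstar - xt‖ ^ 2 - 1 / (2 * γ) * ‖xstar - xnext ω‖ ^ 2)
          + cross ω) ∂P :=
        integral_mono (hint1.sub (integrable_const _)) (hbound.add hcross.1) hstep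
    _ = _ := by rw [integral_add hbound hcross.1, hcross.2, add_zero]

/-- One-step descent bound for projected stochastic gradient with an unbiased estimator. -/
theorem stmt7 {d : ℕ} {Ω : Type*} [MeasurableSpace Ω]
    (P : Measure Ω) [IsProbabilityMeasure P]
    (μ L γ : ℝ) (hμ : 0 < μ) (hL : 0 < L) (hγ : γ ∈ Set.Ioo 0 (1 / L))
    (D : Set (EuclideanSpace ℝ (Fin d))) (hDconv : Convex ℝ D) (hDcomp : IsCompact D)
    (hDne : D.Nonempty)
    (g : EuclideanSpace ℝ (Fin d) → ℝ)
    (g' : EuclideanSpace ℝ (Fin d) → EuclideanSpace ℝ (Fin d))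
    (hgrad : ∀ x, HasGradientAt g (g' x) x)
    (hsc : StrongConvexOn Set.univ μ g)
    (hsmooth : ∀ x y, ‖g' x - g' y‖ ≤ L * ‖x - y‖)
    (xstar : EuclideanSpace ℝ (Fin d)) (hxs : xstar ∈ D) (hmin : IsMinOn g D xstar)
    (xt : EuclideanSpace ℝ (Fin d)) (hxt : xt ∈ D)
    (est : Ω → EuclideanSpace ℝ (Fin d))
    (hunbiased : ∫ ω, est ω ∂P = g' xt)
    (xnext : Ω → EuclideanSpace ℝ (Fin d))
    (hnextD : ∀ ω, xnext ω ∈ D)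
    (hproj : ∀ ω, ∀ y ∈ D, ‖xnext ω - (xt - γ • est ω)‖ ≤ ‖y - (xt - γ • est ω)‖)
    (hint1 : Integrable (fun ω => g (xnext ω)) P)
    (hint2 : Integrable (fun ω => ‖est ω - g' xt‖ ^ 2) P)
    (hint3 : Integrable (fun ω => ‖xstar - xnext ω‖ ^ 2) P) :
    ∫ ω, (g (xnext ω) - g xstar) ∂P ≤
      ∫ ω, (γ / (2 * (1 - γ * L)) * ‖est ω - g' xt‖ ^ 2
        + (1 - μ * γ) / (2 * γ) * ‖xstar - xt‖ ^ 2
        - 1 / (2 * γ) * ‖xstar - xnext ω‖ ^ 2) ∂P :=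
  stmt7_general P μ L γ hμ hγ D hDconv g g' hgrad hsc hsmooth xstar hxs hmin xt hxt est hunbiased
    xnext hnextD hproj hint1 hint2 hint3
end

section
/- Suppose each f_j is G-Lipschitz on D of diameter |D|, and x̂_prev ∈ D satisfies E[g_prev(x̂_prev)] - g_prev(x*_prev) ≤ ε/2 for some stage prev. Then for any later stage i with prev < i ≤ (1+α)·prev, the same point satisfies E[g_i(x̂_prev)] - g_i(x_i*) ≤ ε/2 + |D|·G·α. -/
open Finset

/-- A point that is ε/2-optimal at stage prev remains (ε/2 + |D|Gα)-optimal
at every later stage i ≤ (1+α)·prev. -/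
theorem stmt14 {d n : ℕ} (G R α ε : ℝ) (hG : 0 < G) (hR : 0 ≤ R) (hα : 0 ≤ α) (hε : 0 ≤ ε)
    (D : Set (EuclideanSpace ℝ (Fin d))) (hDconv : Convex ℝ D) (hDcomp : IsCompact D)
    (hdiam : ∀ x ∈ D, ∀ y ∈ D, ‖x - y‖ ≤ R)
    (f : ℕ → EuclideanSpace ℝ (Fin d) → ℝ)
    (hlip : ∀ k ∈ Finset.Icc 1 n, ∀ x ∈ D, ∀ y ∈ D, |f k x - f k y| ≤ G * ‖x - y‖)
    (g : ℕ → EuclideanSpace ℝ (Fin d) → ℝ)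
    (hg : ∀ i x, g i x = (∑ k ∈ Finset.Icc 1 i, f k x) / i)
    (xstar : ℕ → EuclideanSpace ℝ (Fin d))
    (hxstarD : ∀ i ∈ Finset.Icc 1 n, xstar i ∈ D)
    (hxstarmin : ∀ i ∈ Finset.Icc 1 n, IsMinOn (g i) D (xstar i))
    (p i : ℕ) (hp : 1 ≤ p) (hpi : p < i) (hin : i ≤ n)
    (hii : (i : ℝ) ≤ (1 + α) * p)
    (xhat : EuclideanSpace ℝ (Fin d)) (hxhat : xhat ∈ D)
    (hclose : g p xhat - g p (xstar p) ≤ ε / 2) :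
    g i xhat - g i (xstar i) ≤ ε / 2 + R * G * α := by
  have hi0 : (0:ℝ) < (i:ℝ) := by exact_mod_cast Nat.lt_of_le_of_lt (Nat.zero_le p) hpi
  have hp0 : (0:ℝ) < (p:ℝ) := by exact_mod_cast hp
  have hpiR : (p:ℝ) ≤ (i:ℝ) := by exact_mod_cast hpi.le
  have hpIcc : p ∈ Finset.Icc 1 n := Finset.mem_Icc.mpr ⟨hp, le_trans hpi.le hin⟩
  have hiIcc : i ∈ Finset.Icc 1 n := Finset.mem_Icc.mpr ⟨le_trans hp hpi.le, hin⟩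
  have hxiD : xstar i ∈ D := hxstarD i hiIcc
  -- stage-p optimality of xstar p against xstar i
  have h1 : g p xhat - g p (xstar i) ≤ ε / 2 := by
    have hmin : g p (xstar p) ≤ g p (xstar i) :=
      isMinOn_iff.mp (hxstarmin p hpIcc) _ hxiD
    linarith
  set A : ℝ := ∑ k ∈ Finset.Icc 1 p, (f k xhat - f k (xstar i)) with hA
  set B : ℝ := ∑ k ∈ Finset.Ioc p i, (f k xhat - f k (xstar i)) with hB
  -- bound on A from h1
  have hAle : A ≤ (p:ℝ) * (ε / 2) := by
    have hgp : g p xhat - g p (xstar i) = A / p := by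
      rw [hg, hg, hA, Finset.sum_sub_distrib, sub_div]
    rw [hgp] at h1
    calc A = A / p * p := by field_simp
    _ ≤ ε / 2 * p := by
        apply mul_le_mul_of_nonneg_right h1 hp0.le
    _ = (p:ℝ) * (ε / 2) := by ring
  -- per-term bound on B
  have hBle : B ≤ ((i:ℝ) - p) * (G * R) := by
    have hcard : (Finset.Ioc p i).card = i - p := Nat.card_Ioc p i
    have hterm : ∀ k ∈ Finset.Ioc p i, f k xhat - f k (xstar i) ≤ G * R := by
      intro k hk
      obtain ⟨hk1, hk2⟩ := Finset.mem_Ioc.mp hk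
      have hkIcc : k ∈ Finset.Icc 1 n :=
        Finset.mem_Icc.mpr ⟨le_trans hp hk1.le, le_trans hk2 hin⟩
      have h2 := hlip k hkIcc xhat hxhat (xstar i) hxiD
      have h3 : ‖xhat - xstar i‖ ≤ R := hdiam xhat hxhat (xstar i) hxiD
      calc f k xhat - f k (xstar i) ≤ |f k xhat - f k (xstar i)| := le_abs_self _
      _ ≤ G * ‖xhat - xstar i‖ := h2
      _ ≤ G * R := mul_le_mul_of_nonneg_left h3 hG.le
    calc B ≤ (Finset.Ioc p i).card • (G * R) := Finset.sum_le_card_nsmul _ _ _ hterm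
    _ = ((i - p : ℕ) : ℝ) * (G * R) := by rw [hcard, nsmul_eq_mul]
    _ = ((i:ℝ) - p) * (G * R) := by rw [Nat.cast_sub hpi.le]
  -- split the stage-i gap
  have hsplit : g i xhat - g i (xstar i) = (A + B) / i := by
    rw [hg, hg, hA, hB, Finset.sum_sub_distrib, Finset.sum_sub_distrib]
    have hsum : ∀ x : EuclideanSpace ℝ (Fin d),
        (∑ k ∈ Finset.Icc 1 p, f k x) + (∑ k ∈ Finset.Ioc p i, f k x)
          = ∑ k ∈ Finset.Icc 1 i, f k x := by
      intro x
      have e1 : ∀ m, Finset.Icc 1 m = Finset.Ioc 0 m := fun m => rfl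
      rw [e1, e1, Finset.sum_Ioc_consecutive _ (Nat.zero_le p) hpi.le]
    rw [← hsum xhat, ← hsum (xstar i)]
    ring
  -- i - p ≤ α * i
  have hip : (i:ℝ) - p ≤ α * i := by
    nlinarith
  rw [hsplit, div_le_iff₀ hi0]
  nlinarith [mul_le_mul_of_nonneg_right hip (mul_nonneg hG.le hR),
    mul_le_mul_of_nonneg_right hpiR (by linarith : (0:ℝ) ≤ ε/2)]
end

section
/- Let g_i(x) = (1/i)∑_{j=1}^i f_j(x) with each f_j μ-stronglyconvex and G-Lipschitz, minimizers x_i* over convex compact D. If E[‖x̂_{i-1} - x*_{i-1}‖²] ≤ 2ε/μ, then E[‖x̂_{i-1} - x_i*‖²] ≤ (8/μ²)(G/(2i-1))² + 4ε/μ. -/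
open Finset

/-- Minimizer inequality for a sum of strongly convex functions. -/
lemma sum_min_bound {d : ℕ} {D : Set (EuclideanSpace ℝ (Fin d))} (hDconv : Convex ℝ D)
    {μ : ℝ} (hμ : 0 < μ) {f : ℕ → EuclideanSpace ℝ (Fin d) → ℝ} (t : Finset ℕ)
    (hsc : ∀ k ∈ t, StrongConvexOn D μ (f k))
    {x y : EuclideanSpace ℝ (Fin d)} (hx : x ∈ D) (hy : y ∈ D)
    (hmin : ∀ z ∈ D, (∑ k ∈ t, f k x) ≤ ∑ k ∈ t, f k z) :
    (t.card : ℝ) * μ / 2 * ‖y - x‖ ^ 2 ≤ (∑ k ∈ t, f k y) - ∑ k ∈ t, f k x := by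
  have key : ∀ a ∈ Set.Ioo (0:ℝ) 1, (1 - a) * ((t.card : ℝ) * μ / 2 * ‖y - x‖ ^ 2)
      ≤ (∑ k ∈ t, f k y) - ∑ k ∈ t, f k x := by
    intro a ha
    obtain ⟨ha0, ha1⟩ := ha
    have hb0 : (0:ℝ) ≤ 1 - a := by linarith
    have hz : a • y + (1 - a) • x ∈ D := hDconv hy hx ha0.le hb0 (by ring)
    have hk : ∀ k ∈ t, f k (a • y + (1 - a) • x) ≤
        a * f k y + (1 - a) * f k x - a * (1 - a) * (μ / 2 * ‖y - x‖ ^ 2) := by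
      intro k hk
      exact (hsc k hk).2 hy hx ha0.le hb0 (by ring)
    have hsum := Finset.sum_le_sum hk
    have hminz := hmin _ hz
    have hexp : ∑ k ∈ t, (a * f k y + (1 - a) * f k x - a * (1 - a) * (μ / 2 * ‖y - x‖ ^ 2))
        = a * (∑ k ∈ t, f k y) + (1 - a) * (∑ k ∈ t, f k x)
          - a * (1 - a) * ((t.card : ℝ) * (μ / 2 * ‖y - x‖ ^ 2)) := by
      rw [Finset.sum_sub_distrib, Finset.sum_add_distrib, ← Finset.mul_sum, ← Finset.mul_sum,
        Finset.sum_const, nsmul_eq_mul]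
      ring
    rw [hexp] at hsum
    have h1 : a * ((1 - a) * ((t.card : ℝ) * μ / 2 * ‖y - x‖ ^ 2))
        ≤ a * ((∑ k ∈ t, f k y) - ∑ k ∈ t, f k x) := by
      nlinarith [hminz.trans hsum]
    exact le_of_mul_le_mul_left h1 ha0
  set C : ℝ := (t.card : ℝ) * μ / 2 * ‖y - x‖ ^ 2 with hC
  have htend : Filter.Tendsto (fun a : ℝ => (1 - a) * C) (nhdsWithin 0 (Set.Ioi 0)) (nhds C) := by
    have : Filter.Tendsto (fun a : ℝ => (1 - a) * C) (nhds 0) (nhds ((1 - 0) * C)) := by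
      exact Filter.Tendsto.mul_const C (by exact (continuous_const.sub continuous_id).tendsto 0)
    simpa using this.mono_left nhdsWithin_le_nhds
  refine le_of_tendsto htend ?_
  filter_upwards [Ioo_mem_nhdsGT_of_mem (by norm_num : (0:ℝ) ∈ Set.Ico (0:ℝ) 1)] with a ha
  exact key a ha

/-- Initialization bound: distance from the stage-(i-1) output to the stage-i minimizer. -/
theorem stmt17 {d n : ℕ} (μ G ε : ℝ) (hμ : 0 < μ) (hG : 0 < G) (hε : 0 ≤ ε)
    (D : Set (EuclideanSpace ℝ (Fin d))) (hDconv : Convex ℝ D) (hDcomp : IsCompact D)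
    (f : ℕ → EuclideanSpace ℝ (Fin d) → ℝ)
    (hsc : ∀ k ∈ Finset.Icc 1 n, StrongConvexOn D μ (f k))
    (hlip : ∀ k ∈ Finset.Icc 1 n, ∀ x ∈ D, ∀ y ∈ D, |f k x - f k y| ≤ G * ‖x - y‖)
    (g : ℕ → EuclideanSpace ℝ (Fin d) → ℝ)
    (hg : ∀ i x, g i x = (∑ k ∈ Finset.Icc 1 i, f k x) / i)
    (xstar : ℕ → EuclideanSpace ℝ (Fin d))
    (hxstarD : ∀ i ∈ Finset.Icc 1 n, xstar i ∈ D)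
    (hxstarmin : ∀ i ∈ Finset.Icc 1 n, IsMinOn (g i) D (xstar i))
    (i : ℕ) (hi : 2 ≤ i) (hin : i ≤ n)
    (xhat : EuclideanSpace ℝ (Fin d)) (hxhat : xhat ∈ D)
    (hprev : ‖xhat - xstar (i - 1)‖ ^ 2 ≤ 2 * ε / μ) :
    ‖xhat - xstar i‖ ^ 2 ≤ 8 / μ ^ 2 * (G / (2 * (i : ℝ) - 1)) ^ 2 + 4 * ε / μ := by
  set j := i - 1 with hj
  have hji : j + 1 = i := by omega
  have hjmem : j ∈ Finset.Icc 1 n := Finset.mem_Icc.2 ⟨by omega, by omega⟩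
  have himem : i ∈ Finset.Icc 1 n := Finset.mem_Icc.2 ⟨by omega, hin⟩
  have hjR : (j : ℝ) = (i : ℝ) - 1 := by
    have : (i:ℕ) = j + 1 := hji.symm
    rw [this]; push_cast; ring
  set A := xstar i with hA
  set B := xstar j with hB
  have hAD : A ∈ D := hxstarD i himem
  have hBD : B ∈ D := hxstarD j hjmem
  -- minimality of sums
  have hminS : ∀ m ∈ Finset.Icc 1 n, ∀ z ∈ D,
      (∑ k ∈ Finset.Icc 1 m, f k (xstar m)) ≤ ∑ k ∈ Finset.Icc 1 m, f k z := by
    intro m hm z hz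
    have h1 := hxstarmin m hm hz
    simp only [hg] at h1
    have hm1 : (1:ℕ) ≤ m := (Finset.mem_Icc.1 hm).1
    have hmpos : (0:ℝ) < (m:ℝ) := by exact_mod_cast (by omega : 0 < m)
    exact (div_le_div_iff_of_pos_right hmpos).1 h1
  have hsub : ∀ k ∈ Finset.Icc 1 i, StrongConvexOn D μ (f k) := fun k hk =>
    hsc k (Finset.mem_Icc.2 ⟨(Finset.mem_Icc.1 hk).1, le_trans (Finset.mem_Icc.1 hk).2 hin⟩)
  have hsubj : ∀ k ∈ Finset.Icc 1 j, StrongConvexOn D μ (f k) := fun k hk =>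
    hsub k (Finset.mem_Icc.2 ⟨(Finset.mem_Icc.1 hk).1, by have := (Finset.mem_Icc.1 hk).2; omega⟩)
  have hcardi : ((Finset.Icc 1 i).card : ℝ) = (i : ℝ) := by
    rw [Nat.card_Icc]; norm_num
  have hcardj : ((Finset.Icc 1 j).card : ℝ) = (j : ℝ) := by
    rw [Nat.card_Icc]; norm_num
  have h1 := sum_min_bound hDconv hμ (Finset.Icc 1 i) hsub hAD hBD (hminS i himem)
  have h2 := sum_min_bound hDconv hμ (Finset.Icc 1 j) hsubj hBD hAD (hminS j hjmem)
  rw [hcardi] at h1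
  rw [hcardj] at h2
  -- the sum over Icc 1 i splits
  have hsplit : ∀ z, (∑ k ∈ Finset.Icc 1 i, f k z) = (∑ k ∈ Finset.Icc 1 j, f k z) + f i z := by
    intro z
    rw [← hji, Finset.sum_Icc_succ_top (by omega : 1 ≤ j + 1)]
  have hnorm : ‖B - A‖ = ‖A - B‖ := by rw [← neg_sub, norm_neg]
  set Δ := ‖A - B‖ with hΔ
  clear_value A B Δ
  have hΔ0 : 0 ≤ Δ := by rw [hΔ]; exact norm_nonneg _
  have hlipi := hlip i himem B hBD A hAD
  have hfi : f i B - f i A ≤ G * Δ := by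
    calc f i B - f i A ≤ |f i B - f i A| := le_abs_self _
    _ ≤ G * ‖B - A‖ := hlipi
    _ = G * Δ := by rw [hnorm]
  rw [hsplit A, hsplit B, hnorm] at h1
  -- combine: ((2i-1) μ /2) Δ² ≤ G Δ
  have hiR : (2:ℝ) ≤ (i:ℝ) := by exact_mod_cast hi
  rw [hjR] at h2
  have hcomb : (2 * (i:ℝ) - 1) * μ / 2 * Δ ^ 2 ≤ G * Δ := by nlinarith [h1, h2, hfi]
  have hdenom : (0:ℝ) < 2 * (i:ℝ) - 1 := by linarith
  have hdrift : Δ ≤ 2 * G / ((2 * (i:ℝ) - 1) * μ) := by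
    rcases eq_or_lt_of_le hΔ0 with h | h
    · rw [← h]; positivity
    · rw [le_div_iff₀ (by positivity : (0:ℝ) < (2 * (i:ℝ) - 1) * μ)]
      nlinarith [hcomb, h]
  have hdrift2 : Δ ^ 2 ≤ (2 * G / ((2 * (i:ℝ) - 1) * μ)) ^ 2 := by
    exact mul_self_le_mul_self hΔ0 hdrift |>.trans_eq (by ring) |>.trans_eq' (by ring)
  have htri : ‖xhat - A‖ ≤ ‖xhat - B‖ + Δ := by
    have := norm_sub_le_norm_sub_add_norm_sub xhat B A
    linarith [this]
  have hsq : ‖xhat - A‖ ^ 2 ≤ 2 * ‖xhat - B‖ ^ 2 + 2 * Δ ^ 2 := by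
    have hp : ‖xhat - A‖ ^ 2 ≤ (‖xhat - B‖ + Δ) ^ 2 :=
      pow_le_pow_left₀ (norm_nonneg _) htri 2
    have hexp : (‖xhat - B‖ + Δ) ^ 2 = ‖xhat - B‖ ^ 2 + 2 * ‖xhat - B‖ * Δ + Δ ^ 2 := by ring
    have h2ab : 2 * ‖xhat - B‖ * Δ ≤ ‖xhat - B‖ ^ 2 + Δ ^ 2 := two_mul_le_add_sq _ _
    linarith
  have hrw : (2 * G / ((2 * (i:ℝ) - 1) * μ)) ^ 2 = 4 / μ ^ 2 * (G / (2 * (i:ℝ) - 1)) ^ 2 := by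
    field_simp; ring
  rw [hrw] at hdrift2
  have hfinal : 2 * (2 * ε / μ) = 4 * ε / μ := by ring
  calc ‖xhat - A‖ ^ 2 ≤ 2 * ‖xhat - B‖ ^ 2 + 2 * Δ ^ 2 := hsq
    _ ≤ 2 * (2 * ε / μ) + 2 * (4 / μ ^ 2 * (G / (2 * (i:ℝ) - 1)) ^ 2) :=
        add_le_add (mul_le_mul_of_nonneg_left hprev (by norm_num))
          (mul_le_mul_of_nonneg_left hdrift2 (by norm_num))
    _ = 8 / μ ^ 2 * (G / (2 * (i:ℝ) - 1)) ^ 2 + 4 * ε / μ := by ring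
end
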